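/- arXiv:0909.0077 — 2 statements merged into one kernel-verified Lean document; each statement's English description precedes it below -/
import Mathlib

section
/- The normalizer of the subgroup U(H_s) ⊗ 1_e inside the unitary group U(H_s ⊗ H_e) equals U(H_s) ⊗ U(H_e) = {Ψ ⊗ Φ : Ψ unitary on H_s, Φ unitary on H_e}. -/
/-!
Conjugation by a normalizing unitary `U` maps `U(H_s) ⊗ 1`, hence its linear span `M_s ⊗ 1`, into
itself, so it induces an algebra automorphism of `M_s`. By Skolem–Noether this automorphism is
conjugation by an invertible `P`; then `(P⁻¹ ⊗ 1) U` commutes with `M_s ⊗ 1`, so it lies in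
`1 ⊗ M_e` and `U = P ⊗ Φ`. Unitarity of `U` makes `Pᴴ P` and `Φᴴ Φ` reciprocal positive scalars, and
rescaling `P` and `Φ` by reciprocal square roots makes both factors unitary.
-/

open Matrix Kronecker
open scoped ComplexOrder

/-- Hilbert–Schmidt (Frobenius) norm of a complex square matrix. -/
noncomputable def hsNorm {k : Type*} [Fintype k] (M : Matrix k k ℂ) : ℝ :=
  Real.sqrt (Matrix.trace (Mᴴ * M)).re

/-- Trace norm: trace of the positive-semidefinite square root of `Mᴴ * M`. -/
noncomputable def traceNorm {k : Type*} [Fintype k] [DecidableEq k] (M : Matrix k k ℂ) : ℝ :=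
  (Matrix.trace
    ((Matrix.posSemidef_conjTranspose_mul_self M).1.eigenvectorUnitary.1 *
      Matrix.diagonal (((↑) : ℝ → ℂ) ∘ (√·) ∘ (Matrix.posSemidef_conjTranspose_mul_self M).1.eigenvalues) *
      (star (Matrix.posSemidef_conjTranspose_mul_self M).1.eigenvectorUnitary : Matrix k k ℂ))).re

/-- Induced two-norm: the largest singular value of `M`. -/
noncomputable def twoNorm {k : Type*} [Fintype k] [DecidableEq k] (M : Matrix k k ℂ) : ℝ :=
  ⨆ i, Real.sqrt
    ((Matrix.PosSemidef.isHermitian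
      (Matrix.posSemidef_conjTranspose_mul_self M)).eigenvalues i)

/-- Partial trace over the environment factor `e`. -/
noncomputable def ptraceE {s e : Type*} [Fintype s] [Fintype e]
    (M : Matrix (s × e) (s × e) ℂ) : Matrix s s ℂ :=
  Matrix.of fun i j => ∑ ν : e, M (i, ν) (j, ν)

/-- Partial trace over the system factor `s`. -/
noncomputable def ptraceS {s e : Type*} [Fintype s] [Fintype e]
    (M : Matrix (s × e) (s × e) ℂ) : Matrix e e ℂ :=
  Matrix.of fun μ ν => ∑ i : s, M (i, μ) (i, ν)

/-- A density matrix: positive semidefinite with unit trace. -/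
def IsDensity {k : Type*} [Fintype k] (ρ : Matrix k k ℂ) : Prop :=
  ρ.PosSemidef ∧ Matrix.trace ρ = 1

theorem Matrix.exists_units_conj_eq_of_algEquiv {K n : Type*} [Semifield K] [Fintype n]
    [DecidableEq n] (f : Matrix n n K ≃ₐ[K] Matrix n n K) :
    ∃ P : (Matrix n n K)ˣ, ∀ A, f A = P * A * (↑P⁻¹ : Matrix n n K) := by
  obtain ⟨T, hT⟩ := (toLinAlgEquiv'.symm.trans (f.trans toLinAlgEquiv')).eq_linearEquivConjAlgEquiv
  refine ⟨Units.map toLinAlgEquiv'.symm.toMonoidHom (LinearMap.GeneralLinearGroup.ofLinearEquiv T),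
    fun A => ?_⟩
  have := congr(toLinAlgEquiv'.symm ($hT (toLinAlgEquiv' A)))
  simp only [AlgEquiv.trans_apply, AlgEquiv.symm_apply_apply] at this
  rw [this, LinearEquiv.conjAlgEquiv_apply, ← Module.End.mul_eq_comp, ← Module.End.mul_eq_comp]
  simp only [map_mul, AlgEquiv.symm_apply_apply, mul_assoc]
  rfl

theorem AlgHom.exists_algEquiv_of_range_le {K A B : Type*} [Field K] [Ring A] [Ring B]
    [Algebra K A] [Algebra K B] [FiniteDimensional K A] {ι φ : A →ₐ[K] B}
    (hι : Function.Injective ι) (hφ : Function.Injective φ) (h : φ.range ≤ ι.range) :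
    ∃ g : A ≃ₐ[K] A, ∀ a, ι (g a) = φ a := by
  let g : A →ₐ[K] A :=
    (AlgEquiv.ofInjective ι hι).symm.toAlgHom.comp (φ.codRestrict ι.range fun a => h ⟨a, rfl⟩)
  have hg : ∀ a, ι (g a) = φ a := fun a =>
    congr_arg Subtype.val ((AlgEquiv.ofInjective ι hι).apply_symm_apply _)
  have hg_inj : Function.Injective g := fun a b hab => hφ (by rw [← hg, ← hg, hab])
  exact ⟨AlgEquiv.ofBijective g
    ⟨hg_inj, (LinearMap.injective_iff_surjective (f := g.toLinearMap)).mp hg_inj⟩, hg⟩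

theorem CStarAlgebra.range_le_of_forall_unitary_mem {A B : Type*} [CStarAlgebra A] [Ring B]
    [Algebra ℂ B] (φ : A →ₐ[ℂ] B) {S : Subalgebra ℂ B} (h : ∀ u ∈ unitary A, φ u ∈ S) :
    φ.range ≤ S := by
  rintro _ ⟨a, rfl⟩
  have hspan := (Submodule.span_le (p := (Subalgebra.toSubmodule S).comap φ.toLinearMap)).mpr h
  exact hspan (by rw [CStarAlgebra.span_unitary]; trivial)

namespace Matrix

variable {m n : Type*} [Fintype m] [DecidableEq m] [Fintype n] [DecidableEq n]

section CommSemiring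

variable {R : Type*} [CommSemiring R]

variable (m n R) in
noncomputable def kroneckerOneAlgHom : Matrix m m R →ₐ[R] Matrix (m × n) (m × n) R :=
  (kroneckerAlgEquiv m n R).toAlgHom.comp Algebra.TensorProduct.includeLeft

@[simp]
theorem kroneckerOneAlgHom_apply (A : Matrix m m R) : kroneckerOneAlgHom m n R A = A ⊗ₖ 1 := by
  simp [kroneckerOneAlgHom]

omit [Fintype m] [DecidableEq m] [Fintype n] in
theorem kronecker_one_injective {l : Type*} [Nonempty n] :
    Function.Injective fun A : Matrix l m R => A ⊗ₖ (1 : Matrix n n R) := by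
  intro A B h
  obtain ⟨k⟩ := ‹Nonempty n›
  ext i j
  simpa using congr_fun₂ h (i, k) (j, k)

theorem exists_eq_one_kronecker_of_commute {V : Matrix (m × n) (m × n) R}
    (h : ∀ A : Matrix m m R, Commute (A ⊗ₖ (1 : Matrix n n R)) V) :
    ∃ Φ : Matrix n n R, V = 1 ⊗ₖ Φ := by
  have hsingle : ∀ i j,
      compRingEquiv m n R (single i j 1) = single i j 1 ⊗ₖ (1 : Matrix n n R) := by
    intro i j
    ext ⟨a, μ⟩ ⟨b, ν⟩
    by_cases hab : i = a ∧ j = b <;> simp [compRingEquiv, one_apply, hab]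
  obtain ⟨Φ, hΦ⟩ : (compRingEquiv m n R).symm V ∈ Set.range (scalar m) :=
    mem_range_scalar_iff_commute_single'.mpr fun i j => by
      simpa [← hsingle] using (h (single i j 1)).map (compRingEquiv m n R).symm
  refine ⟨Φ, ?_⟩
  rw [← (compRingEquiv m n R).apply_symm_apply V, ← hΦ]
  ext ⟨a, μ⟩ ⟨b, ν⟩
  by_cases hab : a = b <;> simp [compRingEquiv, hab]

end CommSemiring

theorem exists_eq_kronecker_of_mul_kronecker_one {R : Type*} [CommRing R]
    {U : Matrix (m × n) (m × n) R} (P : (Matrix m m R)ˣ)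
    (h : ∀ A, U * (A ⊗ₖ 1) =
      (((P : Matrix m m R) * A * (↑P⁻¹ : Matrix m m R)) ⊗ₖ (1 : Matrix n n R)) * U) :
    ∃ Φ : Matrix n n R, U = P ⊗ₖ Φ := by
  obtain ⟨Φ, hΦ⟩ := exists_eq_one_kronecker_of_commute
    (V := (((P⁻¹ : (Matrix m m R)ˣ) : Matrix m m R) ⊗ₖ 1) * U) fun A => by
      rw [Commute, SemiconjBy, mul_assoc, h, ← mul_assoc, ← mul_assoc, ← mul_kronecker_mul,
        ← mul_kronecker_mul]
      simp [mul_assoc]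
  refine ⟨Φ, ?_⟩
  rw [← one_mul Φ, ← mul_one (P : Matrix m m R), mul_kronecker_mul, ← hΦ, ← mul_assoc,
    ← mul_kronecker_mul]
  simp

omit [Fintype m] [Fintype n] in
theorem exists_smul_one_of_kronecker_eq_one {R : Type*} [CommSemiring R] [Nonempty m]
    [Nonempty n] {A : Matrix m m R} {B : Matrix n n R} (h : A ⊗ₖ B = 1) :
    ∃ c : R, A = c • 1 ∧ c • B = 1 := by
  obtain ⟨i₀⟩ := ‹Nonempty m›
  obtain ⟨μ₀⟩ := ‹Nonempty n›
  have hA : ∀ i j, A i j * B μ₀ μ₀ = (1 : Matrix m m R) i j := fun i j => by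
    simpa [one_apply] using congr_fun₂ h (i, μ₀) (j, μ₀)
  have hB : ∀ μ ν, A i₀ i₀ * B μ ν = (1 : Matrix n n R) μ ν := fun μ ν => by
    simpa [one_apply] using congr_fun₂ h (i₀, μ) (i₀, ν)
  have hcb : A i₀ i₀ * B μ₀ μ₀ = 1 := by simpa using hA i₀ i₀
  refine ⟨A i₀ i₀, ext fun i j => ?_, ext fun μ ν => by simpa using hB μ ν⟩
  calc A i j = A i j * B μ₀ μ₀ * A i₀ i₀ := by rw [mul_assoc, mul_comm (B μ₀ μ₀), hcb, mul_one]
    _ = (A i₀ i₀ • (1 : Matrix m m R)) i j := by rw [hA]; simp [mul_comm]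

theorem exists_kronecker_eq_of_kronecker_mem_unitaryGroup {𝕜 : Type*} [RCLike 𝕜]
    [Nonempty m] [Nonempty n] {A : Matrix m m 𝕜} {B : Matrix n n 𝕜}
    (h : A ⊗ₖ B ∈ unitaryGroup (m × n) 𝕜) :
    ∃ Ψ ∈ unitaryGroup m 𝕜, ∃ Φ ∈ unitaryGroup n 𝕜, A ⊗ₖ B = Ψ ⊗ₖ Φ := by
  have h1 : (Aᴴ * A) ⊗ₖ (Bᴴ * B) = 1 := by
    simpa [mem_unitaryGroup_iff', star_eq_conjTranspose, conjTranspose_kronecker,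
      ← mul_kronecker_mul] using h
  obtain ⟨c, hA, hB⟩ := exists_smul_one_of_kronecker_eq_one h1
  obtain ⟨i₀⟩ := ‹Nonempty m›
  have hc_nonneg : 0 ≤ c := by
    simpa [hA] using (posSemidef_conjTranspose_mul_self A).diag_nonneg (i := i₀)
  have hc_ne : c ≠ 0 := by
    rintro rfl
    simp at hB
  obtain ⟨r, hr, rfl⟩ := RCLike.pos_iff_exists_ofReal.mp (lt_of_le_of_ne hc_nonneg hc_ne.symm)
  have hsqrt : (√r : 𝕜) * √r = r := by
    rw [← RCLike.ofReal_mul, Real.mul_self_sqrt hr.le]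
  have hstar : star (√r : 𝕜) = √r := RCLike.conj_ofReal _
  have hsqrt_ne : (√r : 𝕜) ≠ 0 := RCLike.ofReal_ne_zero.mpr (Real.sqrt_pos.mpr hr).ne'
  refine ⟨(√r : 𝕜)⁻¹ • A, ?_, (√r : 𝕜) • B, ?_, ?_⟩
  · rw [mem_unitaryGroup_iff', star_eq_conjTranspose, conjTranspose_smul, smul_mul_smul_comm, hA,
      smul_smul, star_inv₀, hstar, ← hsqrt, ← mul_inv,
      inv_mul_cancel₀ (mul_ne_zero hsqrt_ne hsqrt_ne), one_smul]
  · rw [mem_unitaryGroup_iff', star_eq_conjTranspose, conjTranspose_smul, smul_mul_smul_comm,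
      hstar, hsqrt, hB]
  · rw [smul_kronecker, kronecker_smul, smul_smul, inv_mul_cancel₀ hsqrt_ne, one_smul]

omit [DecidableEq m] in
theorem kronecker_mul_kronecker_one_mul_conjTranspose {R : Type*} [CommRing R] [StarRing R]
    (Ψ W : Matrix m m R) {Φ : Matrix n n R} (hΦ : Φ ∈ unitaryGroup n R) :
    (Ψ ⊗ₖ Φ) * (W ⊗ₖ 1) * (Ψ ⊗ₖ Φ)ᴴ = (Ψ * W * Ψᴴ) ⊗ₖ 1 := by
  rw [conjTranspose_kronecker, ← mul_kronecker_mul, ← mul_kronecker_mul, mul_one,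
    ← star_eq_conjTranspose Φ, hΦ.2]

omit [Fintype n] [DecidableEq n] in
theorem image_conj_unitaryGroup {R : Type*} [CommRing R] [StarRing R] {Ψ : Matrix m m R}
    (hΨ : Ψ ∈ unitaryGroup m R) :
    (fun W => Ψ * W * Ψᴴ) '' unitaryGroup m R = unitaryGroup m R := by
  rw [← star_eq_conjTranspose]
  ext W'
  constructor
  · rintro ⟨W, hW, rfl⟩
    exact mul_mem (mul_mem hΨ hW) (Unitary.star_mem hΨ)
  · intro hW'
    refine ⟨star Ψ * W' * Ψ, mul_mem (mul_mem (Unitary.star_mem hΨ) hW') hΨ, ?_⟩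
    simp only [← mul_assoc, hΨ.2, one_mul]
    rw [mul_assoc, hΨ.2, mul_one]

theorem exists_eq_kronecker_of_conj_kronecker_one [Nonempty m] [Nonempty n]
    {U : Matrix (m × n) (m × n) ℂ} (hU : U ∈ unitaryGroup (m × n) ℂ)
    (h : ∀ W ∈ unitaryGroup m ℂ, ∃ W', U * (W ⊗ₖ (1 : Matrix n n ℂ)) * Uᴴ = W' ⊗ₖ 1) :
    ∃ Ψ ∈ unitaryGroup m ℂ, ∃ Φ ∈ unitaryGroup n ℂ, U = Ψ ⊗ₖ Φ := by
  let ι := kroneckerOneAlgHom m n ℂ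
  let conjU := Unitary.conjStarAlgAut ℂ _ ⟨U, hU⟩
  have hrange : (conjU.toAlgEquiv.toAlgHom.comp ι).range ≤ ι.range := by
    open scoped Matrix.Norms.L2Operator in
    refine CStarAlgebra.range_le_of_forall_unitary_mem _ fun W hW => ?_
    obtain ⟨W', hW'⟩ := h W hW
    exact ⟨W', by simpa [ι, conjU, ← star_eq_conjTranspose] using hW'.symm⟩
  obtain ⟨g, hg⟩ := AlgHom.exists_algEquiv_of_range_le kronecker_one_injective
    (conjU.injective.comp kronecker_one_injective) hrange
  obtain ⟨P, hP⟩ := exists_units_conj_eq_of_algEquiv g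
  obtain ⟨Φ, rfl⟩ := exists_eq_kronecker_of_mul_kronecker_one (U := U) (n := n) P fun A => by
    have hconj :
        ((P : Matrix m m ℂ) * A * (↑P⁻¹ : Matrix m m ℂ)) ⊗ₖ 1 = U * (A ⊗ₖ 1) * star U := by
      simpa [ι, conjU, hP] using hg A
    calc U * (A ⊗ₖ 1) = U * (A ⊗ₖ 1) * (star U * U) := by rw [hU.1, mul_one]
      _ = _ := by rw [hconj, mul_assoc _ (star U)]
  exact exists_kronecker_eq_of_kronecker_mem_unitaryGroup hU

end Matrix

/-- the normalizer of `U(H_s) ⊗ 1_e` in `U(H_s ⊗ H_e)` is `U(H_s) ⊗ U(H_e)`. -/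
theorem stmt2 {s e : Type*} [Fintype s] [Fintype e] [DecidableEq s] [DecidableEq e]
    [Nonempty s] [Nonempty e] :
    {U : Matrix (s × e) (s × e) ℂ | U ∈ Matrix.unitaryGroup (s × e) ℂ ∧
        (fun A => U * A * Uᴴ) ''
            {A : Matrix (s × e) (s × e) ℂ |
              ∃ W ∈ Matrix.unitaryGroup s ℂ, A = W ⊗ₖ (1 : Matrix e e ℂ)} =
          {A : Matrix (s × e) (s × e) ℂ |
            ∃ W ∈ Matrix.unitaryGroup s ℂ, A = W ⊗ₖ (1 : Matrix e e ℂ)}} =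
      {U : Matrix (s × e) (s × e) ℂ | ∃ Ψ ∈ Matrix.unitaryGroup s ℂ,
        ∃ Φ ∈ Matrix.unitaryGroup e ℂ, U = Ψ ⊗ₖ Φ} := by
  have hS : {A : Matrix (s × e) (s × e) ℂ | ∃ W ∈ unitaryGroup s ℂ, A = W ⊗ₖ 1} =
      (· ⊗ₖ (1 : Matrix e e ℂ)) '' unitaryGroup s ℂ := by
    ext
    simp [eq_comm]
  ext U
  constructor
  · rintro ⟨hU, himg⟩
    refine exists_eq_kronecker_of_conj_kronecker_one hU fun W hW => ?_
    obtain ⟨W', -, hW'⟩ := himg.subset ⟨W ⊗ₖ 1, ⟨W, hW, rfl⟩, rfl⟩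
    exact ⟨W', hW'⟩
  · rintro ⟨Ψ, hΨ, Φ, hΦ, rfl⟩
    refine ⟨kronecker_mem_unitary hΨ hΦ, ?_⟩
    rw [hS, Set.image_image]
    simp_rw [kronecker_mul_kronecker_one_mul_conjTranspose _ _ hΦ]
    rw [← Set.image_image (· ⊗ₖ (1 : Matrix e e ℂ)) (fun W => Ψ * W * Ψᴴ),
      image_conj_unitaryGroup hΨ]
end

section
/- If Δ is a bi-invariant metric on the unitary group of H_s ⊗ H_e (i.e., Δ(W₁UW₂, W₁VW₂) = Δ(U,V) for all unitaries), and the quotient metric is Δ̃([U],[V]) = min_{Φ unitary on H_e} Δ(U, (1_s⊗Φ)V), then for any unitaries U₁, U₂ on H_s⊗H_e and any V₁, V₂ ∈ U(H_s)⊗U(H_e) one has Δ̃([U₂U₁],[V₂V₁]) ≤ Δ̃([U₁],[V₁]) + Δ̃([U₂],[V₂]). -/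
/-!
For a bi-invariant metric,
`Δ(U₂U₁, V₂V₁) ≤ Δ(U₂U₁, U₂V₁) + Δ(U₂V₁, V₂V₁) = Δ(U₁, V₁) + Δ(U₂, V₂)`.
Applying this to representatives `(1 ⊗ Φ)V₁` and `(1 ⊗ Φ')V₂` passes to the quotient because a
tensor-product unitary `V₂ = Ψ ⊗ Φ₂` normalises the environment unitaries:
`(1 ⊗ Φ')V₂(1 ⊗ Φ)V₁ = (1 ⊗ Φ'Φ₂ΦΦ₂*)V₂V₁`, which is again a representative of `[V₂V₁]`.
-/

open Matrix Kronecker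
open scoped ComplexOrder

theorem biInvariant_mul_mul_le {M : Type*} [Monoid M] {G : Submonoid M} {Δ : M → M → ℝ}
    (htri : ∀ U V W, U ∈ G → V ∈ G → W ∈ G → Δ U W ≤ Δ U V + Δ V W)
    (hbi : ∀ U V W₁ W₂, U ∈ G → V ∈ G → W₁ ∈ G → W₂ ∈ G →
      Δ (W₁ * U * W₂) (W₁ * V * W₂) = Δ U V)
    {a₁ a₂ b₁ b₂ : M} (ha₁ : a₁ ∈ G) (ha₂ : a₂ ∈ G) (hb₁ : b₁ ∈ G) (hb₂ : b₂ ∈ G) :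
    Δ (a₂ * a₁) (b₂ * b₁) ≤ Δ a₁ b₁ + Δ a₂ b₂ :=
  calc Δ (a₂ * a₁) (b₂ * b₁)
      ≤ Δ (a₂ * a₁) (a₂ * b₁) + Δ (a₂ * b₁) (b₂ * b₁) :=
        htri _ _ _ (mul_mem ha₂ ha₁) (mul_mem ha₂ hb₁) (mul_mem hb₂ hb₁)
    _ = Δ a₁ b₁ + Δ a₂ b₂ := by
        congr 1
        · simpa using hbi a₁ b₁ a₂ 1 ha₁ hb₁ ha₂ (one_mem G)
        · simpa using hbi a₂ b₂ 1 b₁ ha₂ hb₂ (one_mem G) hb₁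

theorem Real.csInf_le_csInf_add_csInf {L A B : Set ℝ} (hL : BddBelow L) (hA : A.Nonempty)
    (hB : B.Nonempty) (h : ∀ a ∈ A, ∀ b ∈ B, ∃ l ∈ L, l ≤ a + b) :
    sInf L ≤ sInf A + sInf B := by
  suffices sInf L - sInf B ≤ sInf A by linarith
  refine le_csInf hA fun a ha => ?_
  suffices sInf L - a ≤ sInf B by linarith
  refine le_csInf hB fun b hb => ?_
  obtain ⟨l, hl, hlab⟩ := h a ha b hb
  linarith [csInf_le hL hl]

theorem Matrix.kronecker_mul_one_kronecker {R s e : Type*} [CommRing R] [StarRing R]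
    [Fintype s] [Fintype e] [DecidableEq s] [DecidableEq e]
    (Ψ : Matrix s s R) {Φ' : Matrix e e R} (hΦ' : Φ' ∈ unitaryGroup e R) (Φ : Matrix e e R) :
    (Ψ ⊗ₖ Φ') * ((1 : Matrix s s R) ⊗ₖ Φ)
      = ((1 : Matrix s s R) ⊗ₖ (Φ' * Φ * star Φ')) * (Ψ ⊗ₖ Φ') := by
  rw [← mul_kronecker_mul, ← mul_kronecker_mul, mul_assoc _ (star Φ'),
    mem_unitaryGroup_iff'.mp hΦ', mul_one, mul_one, one_mul]

/-- The quotient distance `Δ̃([U], [V])` on `U(H_s ⊗ H_e) / (1 ⊗ U(H_e))`. -/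
noncomputable def quotientDist {s e : Type*} [Fintype s] [Fintype e] [DecidableEq s]
    [DecidableEq e] (Δ : Matrix (s × e) (s × e) ℂ → Matrix (s × e) (s × e) ℂ → ℝ)
    (U V : Matrix (s × e) (s × e) ℂ) : ℝ :=
  sInf {x : ℝ | ∃ Φ ∈ unitaryGroup e ℂ, x = Δ U (((1 : Matrix s s ℂ) ⊗ₖ Φ) * V)}

theorem quotientDist_mul_kronecker_mul_le {s e : Type*} [Fintype s] [Fintype e]
    [DecidableEq s] [DecidableEq e]
    {Δ : Matrix (s × e) (s × e) ℂ → Matrix (s × e) (s × e) ℂ → ℝ}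
    (hnonneg : ∀ U V, U ∈ unitaryGroup (s × e) ℂ → V ∈ unitaryGroup (s × e) ℂ → 0 ≤ Δ U V)
    (htri : ∀ U V W, U ∈ unitaryGroup (s × e) ℂ → V ∈ unitaryGroup (s × e) ℂ →
      W ∈ unitaryGroup (s × e) ℂ → Δ U W ≤ Δ U V + Δ V W)
    (hbi : ∀ U V W₁ W₂, U ∈ unitaryGroup (s × e) ℂ → V ∈ unitaryGroup (s × e) ℂ →
      W₁ ∈ unitaryGroup (s × e) ℂ → W₂ ∈ unitaryGroup (s × e) ℂ →
      Δ (W₁ * U * W₂) (W₁ * V * W₂) = Δ U V)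
    {U₁ U₂ V₁ : Matrix (s × e) (s × e) ℂ} (hU₁ : U₁ ∈ unitaryGroup (s × e) ℂ)
    (hU₂ : U₂ ∈ unitaryGroup (s × e) ℂ) (hV₁ : V₁ ∈ unitaryGroup (s × e) ℂ)
    {Ψ : Matrix s s ℂ} {Φ' : Matrix e e ℂ} (hΨ : Ψ ∈ unitaryGroup s ℂ)
    (hΦ' : Φ' ∈ unitaryGroup e ℂ) :
    quotientDist Δ (U₂ * U₁) ((Ψ ⊗ₖ Φ') * V₁)
      ≤ quotientDist Δ U₁ V₁ + quotientDist Δ U₂ (Ψ ⊗ₖ Φ') := by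
  have hV₂ : Ψ ⊗ₖ Φ' ∈ unitaryGroup (s × e) ℂ := kronecker_mem_unitary hΨ hΦ'
  have henv {Φ : Matrix e e ℂ} (hΦ : Φ ∈ unitaryGroup e ℂ) :
      (1 : Matrix s s ℂ) ⊗ₖ Φ ∈ unitaryGroup (s × e) ℂ :=
    kronecker_mem_unitary (one_mem _) hΦ
  refine Real.csInf_le_csInf_add_csInf ?_ ⟨_, 1, one_mem _, rfl⟩ ⟨_, 1, one_mem _, rfl⟩ ?_
  · refine ⟨0, ?_⟩
    rintro _ ⟨Φ, hΦ, rfl⟩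
    exact hnonneg _ _ (mul_mem hU₂ hU₁) (mul_mem (henv hΦ) (mul_mem hV₂ hV₁))
  rintro _ ⟨Φ₁, hΦ₁, rfl⟩ _ ⟨Φ₂, hΦ₂, rfl⟩
  have hconj : Φ' * Φ₁ * star Φ' ∈ unitaryGroup e ℂ :=
    mul_mem (mul_mem hΦ' hΦ₁) (Unitary.star_mem hΦ')
  refine ⟨_, ⟨Φ₂ * (Φ' * Φ₁ * star Φ'), mul_mem hΦ₂ hconj, rfl⟩, ?_⟩
  have hprod : ((1 ⊗ₖ Φ₂) * (Ψ ⊗ₖ Φ')) * ((1 ⊗ₖ Φ₁) * V₁)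
      = ((1 : Matrix s s ℂ) ⊗ₖ (Φ₂ * (Φ' * Φ₁ * star Φ'))) * ((Ψ ⊗ₖ Φ') * V₁) := by
    rw [mul_assoc (1 ⊗ₖ Φ₂), ← mul_assoc (Ψ ⊗ₖ Φ'), kronecker_mul_one_kronecker Ψ hΦ',
      ← mul_assoc, ← mul_assoc, ← mul_kronecker_mul, one_mul, mul_assoc]
  rw [← hprod]
  exact biInvariant_mul_mul_le htri hbi hU₁ hU₂ (mul_mem (henv hΦ₁) hV₁)
    (mul_mem (henv hΦ₂) hV₂)

theorem stmt8_general {s e : Type*} [Fintype s] [Fintype e] [DecidableEq s] [DecidableEq e]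
    (Δ : Matrix (s × e) (s × e) ℂ → Matrix (s × e) (s × e) ℂ → ℝ)
    (hnonneg : ∀ U V, U ∈ Matrix.unitaryGroup (s × e) ℂ → V ∈ Matrix.unitaryGroup (s × e) ℂ →
      0 ≤ Δ U V)
    (htri : ∀ U V W, U ∈ Matrix.unitaryGroup (s × e) ℂ → V ∈ Matrix.unitaryGroup (s × e) ℂ →
      W ∈ Matrix.unitaryGroup (s × e) ℂ → Δ U W ≤ Δ U V + Δ V W)
    (hbi : ∀ U V W₁ W₂, U ∈ Matrix.unitaryGroup (s × e) ℂ →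
      V ∈ Matrix.unitaryGroup (s × e) ℂ → W₁ ∈ Matrix.unitaryGroup (s × e) ℂ →
      W₂ ∈ Matrix.unitaryGroup (s × e) ℂ → Δ (W₁ * U * W₂) (W₁ * V * W₂) = Δ U V)
    (U₁ U₂ : Matrix (s × e) (s × e) ℂ)
    (hU₁ : U₁ ∈ Matrix.unitaryGroup (s × e) ℂ) (hU₂ : U₂ ∈ Matrix.unitaryGroup (s × e) ℂ)
    (Ψ₁ Ψ₂ : Matrix s s ℂ) (Φ₁ Φ₂ : Matrix e e ℂ)
    (hΨ₁ : Ψ₁ ∈ Matrix.unitaryGroup s ℂ) (hΨ₂ : Ψ₂ ∈ Matrix.unitaryGroup s ℂ)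
    (hΦ₁ : Φ₁ ∈ Matrix.unitaryGroup e ℂ) (hΦ₂ : Φ₂ ∈ Matrix.unitaryGroup e ℂ) :
    sInf {x : ℝ | ∃ Φ ∈ Matrix.unitaryGroup e ℂ,
        x = Δ (U₂ * U₁) (((1 : Matrix s s ℂ) ⊗ₖ Φ) * ((Ψ₂ ⊗ₖ Φ₂) * (Ψ₁ ⊗ₖ Φ₁)))}
      ≤ sInf {x : ℝ | ∃ Φ ∈ Matrix.unitaryGroup e ℂ,
          x = Δ U₁ (((1 : Matrix s s ℂ) ⊗ₖ Φ) * (Ψ₁ ⊗ₖ Φ₁))}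
        + sInf {x : ℝ | ∃ Φ ∈ Matrix.unitaryGroup e ℂ,
            x = Δ U₂ (((1 : Matrix s s ℂ) ⊗ₖ Φ) * (Ψ₂ ⊗ₖ Φ₂))} :=
  quotientDist_mul_kronecker_mul_le hnonneg htri hbi hU₁ hU₂
    (kronecker_mem_unitary hΨ₁ hΦ₁) hΨ₂ hΦ₂

/-- chaining for the quotient metric of a bi-invariant metric `Δ`:
`Δ̃([U₂U₁],[V₂V₁]) ≤ Δ̃([U₁],[V₁]) + Δ̃([U₂],[V₂])` whenever `V₁, V₂` are tensor-product
unitaries. -/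
theorem stmt8 {s e : Type*} [Fintype s] [Fintype e] [DecidableEq s] [DecidableEq e]
    (Δ : Matrix (s × e) (s × e) ℂ → Matrix (s × e) (s × e) ℂ → ℝ)
    (hnonneg : ∀ U V, U ∈ Matrix.unitaryGroup (s × e) ℂ → V ∈ Matrix.unitaryGroup (s × e) ℂ →
      0 ≤ Δ U V)
    (hrefl : ∀ U, U ∈ Matrix.unitaryGroup (s × e) ℂ → Δ U U = 0)
    (hsymm : ∀ U V, U ∈ Matrix.unitaryGroup (s × e) ℂ → V ∈ Matrix.unitaryGroup (s × e) ℂ →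
      Δ U V = Δ V U)
    (htri : ∀ U V W, U ∈ Matrix.unitaryGroup (s × e) ℂ → V ∈ Matrix.unitaryGroup (s × e) ℂ →
      W ∈ Matrix.unitaryGroup (s × e) ℂ → Δ U W ≤ Δ U V + Δ V W)
    (hbi : ∀ U V W₁ W₂, U ∈ Matrix.unitaryGroup (s × e) ℂ →
      V ∈ Matrix.unitaryGroup (s × e) ℂ → W₁ ∈ Matrix.unitaryGroup (s × e) ℂ →
      W₂ ∈ Matrix.unitaryGroup (s × e) ℂ → Δ (W₁ * U * W₂) (W₁ * V * W₂) = Δ U V)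
    (U₁ U₂ : Matrix (s × e) (s × e) ℂ)
    (hU₁ : U₁ ∈ Matrix.unitaryGroup (s × e) ℂ) (hU₂ : U₂ ∈ Matrix.unitaryGroup (s × e) ℂ)
    (Ψ₁ Ψ₂ : Matrix s s ℂ) (Φ₁ Φ₂ : Matrix e e ℂ)
    (hΨ₁ : Ψ₁ ∈ Matrix.unitaryGroup s ℂ) (hΨ₂ : Ψ₂ ∈ Matrix.unitaryGroup s ℂ)
    (hΦ₁ : Φ₁ ∈ Matrix.unitaryGroup e ℂ) (hΦ₂ : Φ₂ ∈ Matrix.unitaryGroup e ℂ) :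
    sInf {x : ℝ | ∃ Φ ∈ Matrix.unitaryGroup e ℂ,
        x = Δ (U₂ * U₁) (((1 : Matrix s s ℂ) ⊗ₖ Φ) * ((Ψ₂ ⊗ₖ Φ₂) * (Ψ₁ ⊗ₖ Φ₁)))}
      ≤ sInf {x : ℝ | ∃ Φ ∈ Matrix.unitaryGroup e ℂ,
          x = Δ U₁ (((1 : Matrix s s ℂ) ⊗ₖ Φ) * (Ψ₁ ⊗ₖ Φ₁))}
        + sInf {x : ℝ | ∃ Φ ∈ Matrix.unitaryGroup e ℂ,
            x = Δ U₂ (((1 : Matrix s s ℂ) ⊗ₖ Φ) * (Ψ₂ ⊗ₖ Φ₂))} :=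
  stmt8_general Δ hnonneg htri hbi U₁ U₂ hU₁ hU₂ Ψ₁ Ψ₂ Φ₁ Φ₂ hΨ₁ hΨ₂ hΦ₁ hΦ₂
end
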